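/- arXiv:2506.11805 — 2 statements merged into one kernel-verified Lean document; each statement's English description precedes it below -/
import Mathlib

section
/- For every real x ≤ 0, (3 − x)·e^{2x} − 3 − 4x·e^{x} − x ≥ 0. -/
open Real

private lemma hAux_deriv (y : ℝ) :
    HasDerivAt (fun t : ℝ => (2 - t) * Real.exp t - (2 + t)) ((1 - y) * Real.exp y - 1) y := by
  have h1 : HasDerivAt (fun t : ℝ => (2 - t) * Real.exp t)
      ((-1) * Real.exp y + (2 - y) * Real.exp y) y := by
    have := ((hasDerivAt_const y (2:ℝ)).sub (hasDerivAt_id y)).mul (Real.hasDerivAt_exp y)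
    convert this using 2 <;> (try rfl) <;> simp [id] <;> ring
  have h2 : HasDerivAt (fun t : ℝ => (2:ℝ) + t) 1 y := by
    have := (hasDerivAt_const y (2:ℝ)).add (hasDerivAt_id y)
    convert this using 2 <;> (try rfl) <;> simp
  have := h1.sub h2
  convert this using 1 <;> (try rfl)
  ring

/-- `(2-x)e^x - (2+x) ≥ 0` for `x ≤ 0`. -/
private lemma hAux_nonneg {x : ℝ} (hx : x ≤ 0) :
    0 ≤ (2 - x) * Real.exp x - (2 + x) := by
  have hanti : Antitone (fun t : ℝ => (2 - t) * Real.exp t - (2 + t)) := by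
    apply antitone_of_deriv_nonpos
    · exact fun y => (hAux_deriv y).differentiableAt
    · intro y
      rw [(hAux_deriv y).deriv]
      have h1 : 1 - y ≤ Real.exp (-y) := by
        have := Real.add_one_le_exp (-y); linarith
      have h2 : (1 - y) * Real.exp y ≤ Real.exp (-y) * Real.exp y :=
        mul_le_mul_of_nonneg_right h1 (Real.exp_pos y).le
      rw [← Real.exp_add] at h2
      simp at h2
      linarith
  have := hanti hx
  simpa using this

private lemma hG'_deriv (y : ℝ) :
    HasDerivAt (fun t : ℝ => (5 - 2*t) * Real.exp (2*t) - (4 + 4*t) * Real.exp t - 1)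
      ((8 - 4*y) * Real.exp (2*y) - (8 + 4*y) * Real.exp y) y := by
  have he2 : HasDerivAt (fun t : ℝ => Real.exp (2*t)) (Real.exp (2*y) * 2) y :=
    (Real.hasDerivAt_exp (2*y)).comp y (by simpa using (hasDerivAt_id y).const_mul (2:ℝ))
  have h1 : HasDerivAt (fun t : ℝ => (5 - 2*t) * Real.exp (2*t))
      ((-2) * Real.exp (2*y) + (5 - 2*y) * (Real.exp (2*y) * 2)) y := by
    have := (((hasDerivAt_id y).const_mul (2:ℝ)).const_sub (5:ℝ)).mul he2
    convert this using 2 <;> (try rfl) <;> simp [id] <;> ring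
  have h2 : HasDerivAt (fun t : ℝ => (4 + 4*t) * Real.exp t)
      (4 * Real.exp y + (4 + 4*y) * Real.exp y) y := by
    have := (((hasDerivAt_id y).const_mul (4:ℝ)).const_add (4:ℝ)).mul (Real.hasDerivAt_exp y)
    convert this using 2 <;> (try rfl) <;> simp [id] <;> ring
  have := (h1.sub h2).sub_const 1
  convert this using 1 <;> (try rfl)
  ring

/-- `G'(x) = (5-2x)e^{2x} - (4+4x)e^x - 1 ≤ 0` for `x ≤ 0`. -/
private lemma hG'_nonpos {x : ℝ} (hx : x ≤ 0) :
    (5 - 2*x) * Real.exp (2*x) - (4 + 4*x) * Real.exp x - 1 ≤ 0 := by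
  have hmono : MonotoneOn (fun t : ℝ => (5 - 2*t) * Real.exp (2*t) - (4 + 4*t) * Real.exp t - 1)
      (Set.Iic (0:ℝ)) := by
    apply monotoneOn_of_deriv_nonneg (convex_Iic 0)
    · exact (Continuous.continuousOn (by continuity))
    · intro y hy
      exact (hG'_deriv y).differentiableAt.differentiableWithinAt
    · intro y hy
      rw [interior_Iic] at hy
      rw [(hG'_deriv y).deriv]
      have hy0 : y ≤ 0 := le_of_lt hy
      have haux := hAux_nonneg hy0
      have hep : (0:ℝ) < Real.exp y := Real.exp_pos y
      have hkey : (8 - 4*y) * Real.exp (2*y) - (8 + 4*y) * Real.exp y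
          = 4 * Real.exp y * ((2 - y) * Real.exp y - (2 + y)) := by
        rw [show (2:ℝ)*y = y + y by ring, Real.exp_add]; ring
      rw [hkey]
      positivity
  have h0 : (0:ℝ) ∈ Set.Iic (0:ℝ) := Set.mem_Iic.mpr le_rfl
  have hxm : x ∈ Set.Iic (0:ℝ) := Set.mem_Iic.mpr hx
  have := hmono hxm h0 hx
  norm_num [Real.exp_zero] at this
  linarith

/-- For every real `x ≤ 0`, `(3 − x)e^{2x} − 3 − 4x e^x − x ≥ 0`. -/
theorem G_nonneg_of_nonpos (x : ℝ) (hx : x ≤ 0) :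
    0 ≤ (3 - x) * Real.exp (2 * x) - 3 - 4 * x * Real.exp x - x := by
  have hG_deriv : ∀ y : ℝ, HasDerivAt
      (fun t : ℝ => (3 - t) * Real.exp (2 * t) - 3 - 4 * t * Real.exp t - t)
      ((5 - 2*y) * Real.exp (2*y) - (4 + 4*y) * Real.exp y - 1) y := by
    intro y
    have he2 : HasDerivAt (fun t : ℝ => Real.exp (2*t)) (Real.exp (2*y) * 2) y :=
      (Real.hasDerivAt_exp (2*y)).comp y (by simpa using (hasDerivAt_id y).const_mul (2:ℝ))
    have h1 : HasDerivAt (fun t : ℝ => (3 - t) * Real.exp (2*t))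
        ((-1) * Real.exp (2*y) + (3 - y) * (Real.exp (2*y) * 2)) y := by
      have := ((hasDerivAt_const y (3:ℝ)).sub (hasDerivAt_id y)).mul he2
      convert this using 2 <;> (try rfl) <;> simp [id] <;> ring
    have h2 : HasDerivAt (fun t : ℝ => 4 * t * Real.exp t)
        (4 * Real.exp y + 4 * y * Real.exp y) y := by
      have := ((hasDerivAt_id y).const_mul (4:ℝ)).mul (Real.hasDerivAt_exp y)
      convert this using 2 <;> (try rfl) <;> simp [id] <;> ring
    have := ((h1.sub_const 3).sub h2).sub (hasDerivAt_id y)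
    convert this using 1 <;> (try rfl)
    ring
  have hanti : AntitoneOn (fun t : ℝ => (3 - t) * Real.exp (2 * t) - 3 - 4 * t * Real.exp t - t)
      (Set.Iic (0:ℝ)) := by
    apply antitoneOn_of_deriv_nonpos (convex_Iic 0)
    · exact (Continuous.continuousOn (by continuity))
    · intro y hy
      exact (hG_deriv y).differentiableAt.differentiableWithinAt
    · intro y hy
      rw [interior_Iic] at hy
      rw [(hG_deriv y).deriv]
      exact hG'_nonpos (le_of_lt hy)
  have h0 : (0:ℝ) ∈ Set.Iic (0:ℝ) := Set.mem_Iic.mpr le_rfl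
  have hxm : x ∈ Set.Iic (0:ℝ) := Set.mem_Iic.mpr hx
  have := hanti hxm h0 hx
  simpa using this
end

section
/- For every real K ≠ 0 and T > 0, (e^{2TK} − 1 − 2TK e^{TK}) / (K (e^{KT} − 1)²) ≤ T/3. -/
open Real

private lemma nonneg_of_deriv (f f' : ℝ → ℝ) (hf : ∀ x, HasDerivAt f (f' x) x)
    (h0 : f 0 = 0) (hf' : ∀ x, 0 ≤ x → 0 ≤ f' x) : ∀ x, 0 ≤ x → 0 ≤ f x := by
  intro x hx
  have hmono : MonotoneOn f (Set.Ici 0) := by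
    apply monotoneOn_of_deriv_nonneg (convex_Ici 0)
    · exact (fun y _ => (hf y).continuousAt.continuousWithinAt)
    · intro y _
      exact (hf y).differentiableAt.differentiableWithinAt
    · intro y hy
      rw [(hf y).deriv]
      exact hf' y (le_of_lt (by simpa using hy))
  have := hmono (Set.self_mem_Ici) (Set.mem_Ici.mpr hx) hx
  linarith [h0 ▸ this]

private lemma lemA : ∀ x : ℝ, 0 ≤ x → 0 ≤ x * Real.cosh x - Real.sinh x := by
  apply nonneg_of_deriv _ (fun x => x * Real.sinh x)
  · intro x
    have h1 : HasDerivAt (fun x : ℝ => x * Real.cosh x) (Real.cosh x + x * Real.sinh x) x := by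
      exact ((hasDerivAt_id x).mul (Real.hasDerivAt_cosh x)).congr_deriv (by simp)
    exact (h1.sub (Real.hasDerivAt_sinh x)).congr_deriv (by ring)
  · simp
  · intro x hx
    have : 0 ≤ Real.sinh x := by
      rw [← Real.sinh_zero]
      exact Real.sinh_le_sinh.mpr hx
    exact mul_nonneg hx this

private lemma lemB : ∀ x : ℝ, 0 ≤ x → 0 ≤ x * Real.sinh x + 2 - 2 * Real.cosh x := by
  apply nonneg_of_deriv _ (fun x => x * Real.cosh x - Real.sinh x)
  · intro x
    have h1 : HasDerivAt (fun x : ℝ => x * Real.sinh x) (Real.sinh x + x * Real.cosh x) x := by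
      exact ((hasDerivAt_id x).mul (Real.hasDerivAt_sinh x)).congr_deriv (by simp)
    have h2 : HasDerivAt (fun x : ℝ => x * Real.sinh x + 2 - 2 * Real.cosh x)
        (Real.sinh x + x * Real.cosh x - 2 * Real.sinh x) x :=
      (h1.add_const 2).sub ((Real.hasDerivAt_cosh x).const_mul 2)
    convert h2 using 1; ring
  · simp
  · exact lemA

private lemma lemKey : ∀ x : ℝ, 0 ≤ x → 3 * Real.sinh x ≤ x * Real.cosh x + 2 * x := by
  have h : ∀ x : ℝ, 0 ≤ x → 0 ≤ x * Real.cosh x + 2 * x - 3 * Real.sinh x := by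
    apply nonneg_of_deriv _ (fun x => x * Real.sinh x + 2 - 2 * Real.cosh x)
    · intro x
      have h1 : HasDerivAt (fun x : ℝ => x * Real.cosh x) (Real.cosh x + x * Real.sinh x) x := by
        exact ((hasDerivAt_id x).mul (Real.hasDerivAt_cosh x)).congr_deriv (by simp)
      have h2 : HasDerivAt (fun x : ℝ => x * Real.cosh x + 2 * x - 3 * Real.sinh x)
          (Real.cosh x + x * Real.sinh x + 2 * 1 - 3 * Real.cosh x) x :=
        (h1.add ((hasDerivAt_id x).const_mul 2)).sub ((Real.hasDerivAt_sinh x).const_mul 3)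
      convert h2 using 1; ring
    · simp
    · exact lemB
  intro x hx; linarith [h x hx]

/-- For x ≥ 0 : (3-x)e^{2x} ≤ 3 + x + 4x e^x -/
private lemma Gpos (x : ℝ) (hx : 0 ≤ x) :
    3 * (Real.exp (2 * x) - 1 - 2 * x * Real.exp x) ≤ x * (Real.exp x - 1) ^ 2 := by
  have h := lemKey x hx
  rw [Real.sinh_eq, Real.cosh_eq] at h
  have he : Real.exp (2 * x) = Real.exp x * Real.exp x := by
    rw [two_mul, Real.exp_add]
  have hne : Real.exp x * Real.exp (-x) = 1 := by
    rw [← Real.exp_add]; simp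
  have hp : 0 < Real.exp x := Real.exp_pos x
  nlinarith [mul_le_mul_of_nonneg_left h (le_of_lt hp)]

private lemma Gneg (x : ℝ) (hx : x ≤ 0) :
    x * (Real.exp x - 1) ^ 2 ≤ 3 * (Real.exp (2 * x) - 1 - 2 * x * Real.exp x) := by
  have h := lemKey (-x) (by linarith)
  rw [Real.sinh_neg, Real.cosh_neg, Real.sinh_eq, Real.cosh_eq] at h
  have he : Real.exp (2 * x) = Real.exp x * Real.exp x := by
    rw [two_mul, Real.exp_add]
  have hne : Real.exp x * Real.exp (-x) = 1 := by
    rw [← Real.exp_add]; simp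
  have hp : 0 < Real.exp x := Real.exp_pos x
  nlinarith [mul_le_mul_of_nonneg_left h (le_of_lt hp)]

/-- For every `K ≠ 0` and `T > 0`,
`(e^{2TK} − 1 − 2TK e^{TK}) / (K (e^{KT} − 1)²) ≤ T/3`. -/
theorem G_integral_bound (K T : ℝ) (hK : K ≠ 0) (hT : 0 < T) :
    (Real.exp (2 * T * K) - 1 - 2 * T * K * Real.exp (T * K)) /
      (K * (Real.exp (K * T) - 1) ^ 2) ≤ T / 3 := by
  set x := T * K with hxdef
  have hKT : K * T = x := by rw [hxdef]; ring
  have h2 : 2 * T * K = 2 * x := by rw [hxdef]; ring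
  rw [hKT, h2]
  rcases lt_or_gt_of_ne hK with hKneg | hKpos
  · -- K < 0, x < 0
    have hx : x < 0 := by rw [hxdef]; exact mul_neg_of_pos_of_neg hT hKneg
    have hexlt : Real.exp x < 1 := by
      rw [← Real.exp_zero]; exact Real.exp_lt_exp.mpr hx
    have hsq : 0 < (Real.exp x - 1) ^ 2 := by
      have : Real.exp x - 1 ≠ 0 := by linarith
      positivity
    have hD : K * (Real.exp x - 1) ^ 2 < 0 := mul_neg_of_neg_of_pos hKneg hsq
    rw [div_le_iff_of_neg hD]
    have h := Gneg x (le_of_lt hx)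
    have hTx : T * K = x := by rw [hxdef]
    nlinarith [hsq, h]
  · -- K > 0, x > 0
    have hx : 0 < x := by rw [hxdef]; exact mul_pos hT hKpos
    have hexgt : 1 < Real.exp x := by
      rw [← Real.exp_zero]; exact Real.exp_lt_exp.mpr hx
    have hsq : 0 < (Real.exp x - 1) ^ 2 := by
      have : Real.exp x - 1 ≠ 0 := by linarith
      positivity
    have hD : 0 < K * (Real.exp x - 1) ^ 2 := mul_pos hKpos hsq
    rw [div_le_div_iff₀ hD (by norm_num : (0:ℝ) < 3)]
    have h := Gpos x (le_of_lt hx)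
    nlinarith [hsq, h]
end
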